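/- Let I₁, I₂ : {0,1}² → ℝ be given by the two-user symmetric Gaussian model with values Iᵢ(both share) = (1+ρ²)/(4-ρ²), Iᵢ(only i shares) = 1/2, Iᵢ(only other shares) = ρ²/2, Iᵢ(none) = 0, and let both users have privacy value v = 1/2... Then for any price vector (p₁,p₂) with p₁, p₂ ∈ [ (2-ρ²)²/(2(4-ρ²)), 1/2 ], both a = (0,0) and a = (1,1) are user (Nash) equilibria of the sharing game where user i's payoff is pᵢ - Iᵢ(aᵢ=1, a₋ᵢ) if aᵢ = 1 and -Iᵢ(aᵢ=0, a₋ᵢ) if aᵢ = 0. -/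
import Mathlib

namespace TwoUserSharing

/-- Breached information about user 1 in the two-user symmetric Gaussian model,
as a function of the sharing actions `(a₁, a₂)`. -/
noncomputable def I1 (ρ : ℝ) : Bool → Bool → ℝ
  | true,  true  => (1 + ρ ^ 2) / (4 - ρ ^ 2)
  | true,  false => 1 / 2
  | false, true  => ρ ^ 2 / 2
  | false, false => 0

/-- Breached information about user 2 (symmetric). -/
noncomputable def I2 (ρ : ℝ) : Bool → Bool → ℝ
  | true,  true  => (1 + ρ ^ 2) / (4 - ρ ^ 2)
  | true,  false => ρ ^ 2 / 2
  | false, true  => 1 / 2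
  | false, false => 0

/-- Payoff of user 1 (privacy value `v₁ = 1`): `p₁·a₁ - I₁(a)`. -/
noncomputable def u1 (ρ p₁ : ℝ) (a₁ a₂ : Bool) : ℝ :=
  (if a₁ then p₁ else 0) - I1 ρ a₁ a₂

/-- Payoff of user 2 (privacy value `v₂ = 1`): `p₂·a₂ - I₂(a)`. -/
noncomputable def u2 (ρ p₂ : ℝ) (a₁ a₂ : Bool) : ℝ :=
  (if a₂ then p₂ else 0) - I2 ρ a₁ a₂

/-- In the two-user symmetric Gaussian sharing game, for any prices
`p₁, p₂ ∈ [(2-ρ²)²/(2(4-ρ²)), 1/2]`, both the profile where nobody shares and the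
profile where both share are user (Nash) equilibria. -/
theorem both_profiles_user_equilibria (ρ p₁ p₂ : ℝ) (hρ : ρ ∈ Set.Icc (-1 : ℝ) 1)
    (hp₁ : p₁ ∈ Set.Icc ((2 - ρ ^ 2) ^ 2 / (2 * (4 - ρ ^ 2))) (1 / 2))
    (hp₂ : p₂ ∈ Set.Icc ((2 - ρ ^ 2) ^ 2 / (2 * (4 - ρ ^ 2))) (1 / 2)) :
    ((∀ b : Bool, u1 ρ p₁ b false ≤ u1 ρ p₁ false false) ∧
      (∀ b : Bool, u2 ρ p₂ false b ≤ u2 ρ p₂ false false)) ∧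
    ((∀ b : Bool, u1 ρ p₁ b true ≤ u1 ρ p₁ true true) ∧
      (∀ b : Bool, u2 ρ p₂ true b ≤ u2 ρ p₂ true true)) := by
  obtain ⟨hl, hr⟩ := hρ
  have hρ2 : ρ ^ 2 ≤ 1 := by nlinarith
  have h4 : (0:ℝ) < 4 - ρ ^ 2 := by nlinarith
  obtain ⟨h1l, h1r⟩ := hp₁
  obtain ⟨h2l, h2r⟩ := hp₂
  have e1 : (2 - ρ ^ 2) ^ 2 ≤ p₁ * (2 * (4 - ρ ^ 2)) := (div_le_iff₀ (by positivity)).mp h1l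
  have e2 : (2 - ρ ^ 2) ^ 2 ≤ p₂ * (2 * (4 - ρ ^ 2)) := (div_le_iff₀ (by positivity)).mp h2l
  have e3 : (1 + ρ ^ 2) / (4 - ρ ^ 2) * (4 - ρ ^ 2) = 1 + ρ ^ 2 := div_mul_cancel₀ _ h4.ne'
  refine ⟨⟨?_, ?_⟩, ?_, ?_⟩ <;> intro b <;> cases b <;>
    simp [u1, u2, I1, I2] <;> nlinarith [sq_nonneg ρ, sq_nonneg (2 - ρ ^ 2)]
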